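/- (Lemma 2) Let m, g, Crr, H, b, c > 0 be real constants. Define a(D) := m·g·(H + Crr·D) and L(D) := √(H² + D²). Let D > 0 and let V : (0,∞) → (0,∞) be a function differentiable at D whose values satisfy a(s)·V(s)/L(s) + b·V(s)³ = c for all s in a neighborhood of D. Define T(s) := L(s) / V(s). Then T is differentiable at D, T'(D) = (D·V(D) − L(D)²·V'(D)) / (L(D)·V(D)²), and T'(D) > 0. -/

import Mathlib

/-!
Differentiating the power balance `a V / L + b V³ = c` implicitly and clearing denominators gives
`(D V - L² V') (a + 3 b V² L) = V (3 b V² L D + a' L²)` at `D`, where `a' = m g Crr ≥ 0`.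
Both `a + 3 b V² L` and the right-hand side are positive, so the numerator `D V - L² V'` of
`T' = (L' V - L V') / V² = (D V - L² V') / (L V²)` is positive.
-/

open Topology

lemma hasDerivAt_sqrt_sq_add_sq {H D : ℝ} (h : H ^ 2 + D ^ 2 ≠ 0) :
    HasDerivAt (fun s => Real.sqrt (H ^ 2 + s ^ 2)) (D / Real.sqrt (H ^ 2 + D ^ 2)) D := by
  have hinner : HasDerivAt (fun s : ℝ => H ^ 2 + s ^ 2) (2 * D) D := by
    simpa using (hasDerivAt_pow 2 D).const_add (H ^ 2)
  exact ((Real.hasDerivAt_sqrt h).comp D hinner).congr_deriv (by field_simp)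

/-- Implicit differentiation of the power balance, multiplied through by `L³`. -/
lemma power_balance_implicit_deriv {a L V : ℝ → ℝ} {a' L' V' b c D : ℝ}
    (ha : HasDerivAt a a' D) (hL : HasDerivAt L L' D) (hV : HasDerivAt V V' D) (hL0 : L D ≠ 0)
    (heq : ∀ᶠ s in 𝓝 D, a s * V s / L s + b * V s ^ 3 = c) :
    (a' * V D + a D * V') * L D ^ 2 - a D * V D * (L' * L D)
      + 3 * b * V D ^ 2 * V' * L D ^ 3 = 0 := by
  have hF : HasDerivAt (fun s => a s * V s / L s + b * V s ^ 3)
      (((a' * V D + a D * V') * L D - a D * V D * L') / L D ^ 2 + b * (3 * V D ^ 2 * V')) D :=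
    ((ha.mul hV).div hL hL0).add (((hV.pow 3).const_mul b).congr_deriv (by ring))
  have hzero := hF.unique ((hasDerivAt_const D c).congr_of_eventuallyEq heq)
  field_simp at hzero
  linear_combination L D * hzero

lemma ascent_time_numerator_pos {a a' b V V' L D : ℝ} (ha : 0 < a) (ha' : 0 ≤ a') (hb : 0 < b)
    (hV : 0 < V) (hL : 0 < L) (hD : 0 < D)
    (hkey : (a' * V + a * V') * L ^ 2 - a * V * D + 3 * b * V ^ 2 * V' * L ^ 3 = 0) :
    0 < D * V - L ^ 2 * V' := by
  have hfactor : (D * V - L ^ 2 * V') * (a + 3 * b * V ^ 2 * L)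
      = V * (3 * b * V ^ 2 * L * D + a' * L ^ 2) := by
    linear_combination -hkey
  have hrhs : 0 < V * (3 * b * V ^ 2 * L * D + a' * L ^ 2) := by positivity
  rw [← hfactor] at hrhs
  exact pos_of_mul_pos_left hrhs (by positivity)

theorem ascent_time_wrt_D_deriv_pos_general (m g Crr H b c : ℝ)
    (hm : 0 < m) (hg : 0 < g) (hCrr : 0 < Crr) (hH : 0 < H) (hb : 0 < b)
    (D : ℝ) (hD : 0 < D)
    (V : ℝ → ℝ) (V' : ℝ)
    (hpos : ∀ s, 0 < s → 0 < V s)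
    (hderiv : HasDerivAt V V' D)
    (heq : ∀ᶠ s in nhds D,
      m * g * (H + Crr * s) * V s / Real.sqrt (H ^ 2 + s ^ 2) + b * (V s) ^ 3 = c) :
    HasDerivAt (fun s => Real.sqrt (H ^ 2 + s ^ 2) / V s)
      ((D * V D - (Real.sqrt (H ^ 2 + D ^ 2)) ^ 2 * V') /
        (Real.sqrt (H ^ 2 + D ^ 2) * (V D) ^ 2)) D ∧
    0 < (D * V D - (Real.sqrt (H ^ 2 + D ^ 2)) ^ 2 * V') /
        (Real.sqrt (H ^ 2 + D ^ 2) * (V D) ^ 2) := by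
  have hL : 0 < Real.sqrt (H ^ 2 + D ^ 2) := Real.sqrt_pos.mpr (by positivity)
  have hVD : 0 < V D := hpos D hD
  have hLderiv := hasDerivAt_sqrt_sq_add_sq (H := H) (D := D) (by positivity)
  have ha : HasDerivAt (fun s => m * g * (H + Crr * s)) (m * g * Crr) D := by
    simpa using (((hasDerivAt_id D).const_mul Crr).const_add H).const_mul (m * g)
  have hkey := power_balance_implicit_deriv ha hLderiv hderiv hL.ne' heq
  rw [div_mul_cancel₀ _ hL.ne'] at hkey
  refine ⟨?_, div_pos (ascent_time_numerator_pos (by positivity) (by positivity) hb hVD hL hD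
    hkey) (by positivity)⟩
  exact (hLderiv.div hderiv hVD.ne').congr_deriv (by field_simp)

/-- Lemma 2: T(s) = L(s)/V(s) is differentiable at D with
T'(D) = (D·V(D) − L(D)²·V'(D)) / (L(D)·V(D)²) > 0. -/
theorem ascent_time_wrt_D_deriv_pos (m g Crr H b c : ℝ)
    (hm : 0 < m) (hg : 0 < g) (hCrr : 0 < Crr) (hH : 0 < H) (hb : 0 < b) (hc : 0 < c)
    (D : ℝ) (hD : 0 < D)
    (V : ℝ → ℝ) (V' : ℝ)
    (hpos : ∀ s, 0 < s → 0 < V s)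
    (hderiv : HasDerivAt V V' D)
    (heq : ∀ᶠ s in nhds D,
      m * g * (H + Crr * s) * V s / Real.sqrt (H ^ 2 + s ^ 2) + b * (V s) ^ 3 = c) :
    HasDerivAt (fun s => Real.sqrt (H ^ 2 + s ^ 2) / V s)
      ((D * V D - (Real.sqrt (H ^ 2 + D ^ 2)) ^ 2 * V') /
        (Real.sqrt (H ^ 2 + D ^ 2) * (V D) ^ 2)) D ∧
    0 < (D * V D - (Real.sqrt (H ^ 2 + D ^ 2)) ^ 2 * V') /
        (Real.sqrt (H ^ 2 + D ^ 2) * (V D) ^ 2) :=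
  ascent_time_wrt_D_deriv_pos_general m g Crr H b c hm hg hCrr hH hb D hD V V' hpos hderiv heq
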